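/- arXiv:2308.08346 — 2 statements merged into one kernel-verified Lean document; each statement's English description precedes it below -/
import Mathlib

section
/- Let F₀ : ℝ → [0,1] be a distribution function that is continuous and strictly increasing on an interval [a,b], and let (Fₙ) be a sequence of distribution functions converging pointwise to F₀ on [a,b]. If F₀(a) < p ≤ q < F₀(b), then the generalized inverses converge uniformly: sup_{r ∈ [p,q]} |Fₙ⁻¹(r) − F₀⁻¹(r)| → 0 as n → ∞, where G⁻¹(r) := inf{x : r ≤ G(x)}. -/
/-!
Fix a mesh `h > 0` and the grid `a + i h` in `[a, b]`. Since `F₀` is strictly increasing there,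
the finitely many strict inequalities `F₀ (a + i h) < F₀ (a + (i+1) h)` persist under pointwise
convergence in the shifted form `F₀ (a + i h) ≤ Fₙ (a + (i+1) h)` and `Fₙ (a + i h) ≤ F₀ (a + (i+1) h)`
for all large `n`. For monotone `G`, `H`, the grid condition `G (a + i h) ≤ H (a + (i+1) h)` alone
forces the quantiles of `H` to exceed those of `G` by at most `2h`, uniformly in the level `r`;
applying this in both directions bounds `|Fₙ⁻¹ r - F₀⁻¹ r|` by `2h`.
-/

open Filter Set

/-- The generalized inverse (quantile function) of a distribution function. -/
noncomputable def genInv (G : ℝ → ℝ) (r : ℝ) : ℝ := sInf {x : ℝ | r ≤ G x}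

/-- A distribution function: monotone, right-continuous, with values in `[0,1]` and
limits `0` at `-∞` and `1` at `+∞`. -/
structure IsDistributionFunction (F : ℝ → ℝ) : Prop where
  mono : Monotone F
  mem_Icc : ∀ x, F x ∈ Icc (0 : ℝ) 1
  right_cont : ∀ x, ContinuousWithinAt F (Ici x) x
  tendsto_bot : Tendsto F atBot (nhds 0)
  tendsto_top : Tendsto F atTop (nhds 1)

section GenInv

variable {G H : ℝ → ℝ} {a b r : ℝ}

lemma le_genInv_of_lt (hG : Monotone G) (hb : r ≤ G b) {x : ℝ} (hx : G x < r) :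
    x ≤ genInv G r :=
  le_csInf ⟨b, hb⟩ fun _ hy => le_of_not_gt fun hyx => (hy.trans (hG hyx.le)).not_gt hx

lemma genInv_le_of_le (hG : Monotone G) (ha : G a < r) {x : ℝ} (hx : r ≤ G x) :
    genInv G r ≤ x :=
  csInf_le ⟨a, fun _ hy => le_of_not_gt fun hya => (hy.trans (hG hya.le)).not_gt ha⟩ hx

lemma le_of_genInv_lt (hG : Monotone G) (hb : r ≤ G b) {u : ℝ} (hu : genInv G r < u) :
    r ≤ G u := by
  obtain ⟨y, hy, hyu⟩ := exists_lt_of_csInf_lt ⟨b, hb⟩ hu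
  exact hy.trans (hG hyu.le)

lemma genInv_le_genInv_add_of_grid (hG : Monotone G) (hH : Monotone H) {h : ℝ} (hh : 0 < h)
    (hGa : G a < r) (hGb : r ≤ G b) (hHa : H a < r) (hHb : r ≤ H b)
    (hgrid : ∀ i : ℕ, a + (i + 1) * h ≤ b → G (a + i * h) ≤ H (a + (i + 1) * h)) :
    genInv H r ≤ genInv G r + 2 * h := by
  set t := genInv G r
  by_cases hend : b ≤ t + 2 * h
  · exact (genInv_le_of_le hH hHa hHb).trans hend
  push Not at hend
  have hat : a ≤ t := le_genInv_of_lt hG hGb hGa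
  set k := ⌊(t - a) / h⌋₊
  have hk_le : a + k * h ≤ t := by
    have := Nat.floor_le (div_nonneg (sub_nonneg.2 hat) hh.le)
    rw [le_div_iff₀ hh] at this
    linarith
  have hk_gt : t < a + (k + 1) * h := by
    have := Nat.lt_floor_add_one ((t - a) / h)
    rw [div_lt_iff₀ hh] at this
    linarith
  have hr : r ≤ G (a + (k + 1) * h) := le_of_genInv_lt hG hGb hk_gt
  have hstep := hgrid (k + 1) (by push_cast; linarith)
  push_cast at hstep
  calc genInv H r ≤ a + (k + 1 + 1) * h := genInv_le_of_le hH hHa (hr.trans hstep)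
    _ ≤ t + 2 * h := by linarith

end GenInv

section Convergence

variable {F₀ : ℝ → ℝ} {F : ℕ → ℝ → ℝ} {a b : ℝ}

lemma eventually_grid_interlaced (hstrict : StrictMonoOn F₀ (Icc a b))
    (hconv : ∀ w ∈ Icc a b, Tendsto (fun n => F n w) atTop (nhds (F₀ w))) {h : ℝ} (hh : 0 < h) :
    ∀ᶠ n in atTop, ∀ i : ℕ, a + (i + 1) * h ≤ b →
      F₀ (a + i * h) ≤ F n (a + (i + 1) * h) ∧ F n (a + i * h) ≤ F₀ (a + (i + 1) * h) := by
  have hfin : {i : ℕ | a + (i + 1) * h ≤ b}.Finite := by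
    refine (finite_Iio ⌊(b - a) / h⌋₊).subset fun i (hi : a + (i + 1) * h ≤ b) => Nat.le_floor ?_
    rw [le_div_iff₀ hh]
    push_cast
    linarith
  refine hfin.eventually_all.2 fun i (hi : a + (i + 1) * h ≤ b) => ?_
  have hih : 0 ≤ i * h := by positivity
  have hx : a + i * h ∈ Icc a b := ⟨by linarith, by linarith⟩
  have hy : a + (i + 1) * h ∈ Icc a b := ⟨by linarith, hi⟩
  have hlt : F₀ (a + i * h) < F₀ (a + (i + 1) * h) := hstrict hx hy (by linarith)
  filter_upwards [(hconv _ hy).eventually (eventually_gt_nhds hlt),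
    (hconv _ hx).eventually (eventually_lt_nhds hlt)] with n hyn hxn
  exact ⟨hyn.le, hxn.le⟩

lemma eventually_abs_genInv_sub_le (hF₀ : Monotone F₀) (hF : ∀ n, Monotone (F n))
    (hstrict : StrictMonoOn F₀ (Icc a b))
    (hconv : ∀ w ∈ Icc a b, Tendsto (fun n => F n w) atTop (nhds (F₀ w)))
    {p q : ℝ} (hap : F₀ a < p) (hpq : p ≤ q) (hqb : q < F₀ b) {h : ℝ} (hh : 0 < h) :
    ∀ᶠ n in atTop, ∀ r ∈ Icc p q, |genInv (F n) r - genInv F₀ r| ≤ 2 * h := by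
  have hab : a ≤ b := (hF₀.reflect_lt ((hap.trans_le hpq).trans hqb)).le
  filter_upwards [eventually_grid_interlaced hstrict hconv hh,
    (hconv a ⟨le_rfl, hab⟩).eventually (eventually_lt_nhds hap),
    (hconv b ⟨hab, le_rfl⟩).eventually (eventually_gt_nhds hqb)] with n hgrid hna hnb r hr
  have hFa : F n a < r := hna.trans_le hr.1
  have hFb : r ≤ F n b := hr.2.trans hnb.le
  have hF₀a : F₀ a < r := hap.trans_le hr.1
  have hF₀b : r ≤ F₀ b := hr.2.trans hqb.le
  rw [abs_sub_le_iff]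
  constructor
  · have := genInv_le_genInv_add_of_grid hF₀ (hF n) hh hF₀a hF₀b hFa hFb fun i hi => (hgrid i hi).1
    linarith
  · have := genInv_le_genInv_add_of_grid (hF n) hF₀ hh hFa hFb hF₀a hF₀b fun i hi => (hgrid i hi).2
    linarith

end Convergence

theorem genInv_tendstoUniformly_of_pointwise_general
    (F₀ : ℝ → ℝ) (F : ℕ → ℝ → ℝ) (a b p q : ℝ)
    (hF₀ : IsDistributionFunction F₀)
    (hF : ∀ n, IsDistributionFunction (F n))
    (hstrict : StrictMonoOn F₀ (Icc a b))
    (hconv : ∀ w ∈ Icc a b, Tendsto (fun n => F n w) atTop (nhds (F₀ w)))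
    (hap : F₀ a < p) (hpq : p ≤ q) (hqb : q < F₀ b) :
    Tendsto (fun n => ⨆ r : Icc p q, |genInv (F n) r - genInv F₀ r|) atTop (nhds 0) := by
  refine tendsto_order.2 ⟨fun e he => Eventually.of_forall fun n =>
    he.trans_le (Real.iSup_nonneg fun _ => abs_nonneg _), fun ε hε => ?_⟩
  have hε4 : 0 < ε / 4 := by positivity
  filter_upwards [eventually_abs_genInv_sub_le hF₀.mono (fun n => (hF n).mono) hstrict hconv
    hap hpq hqb hε4] with n hn
  calc ⨆ r : Icc p q, |genInv (F n) r - genInv F₀ r| ≤ 2 * (ε / 4) :=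
        Real.iSup_le (fun r => hn r r.2) (by positivity)
    _ < ε := by linarith

/-- If distribution functions `Fₙ` converge pointwise on `[a,b]` to a
distribution function `F₀` that is continuous and strictly increasing on `[a,b]`, and
`F₀ a < p ≤ q < F₀ b`, then the generalized inverses converge uniformly on `[p,q]`. -/
theorem genInv_tendstoUniformly_of_pointwise
    (F₀ : ℝ → ℝ) (F : ℕ → ℝ → ℝ) (a b p q : ℝ)
    (hF₀ : IsDistributionFunction F₀)
    (hF : ∀ n, IsDistributionFunction (F n))
    (hcont : ContinuousOn F₀ (Icc a b))
    (hstrict : StrictMonoOn F₀ (Icc a b))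
    (hconv : ∀ w ∈ Icc a b, Tendsto (fun n => F n w) atTop (nhds (F₀ w)))
    (hap : F₀ a < p) (hpq : p ≤ q) (hqb : q < F₀ b) :
    Tendsto (fun n => ⨆ r : Icc p q, |genInv (F n) r - genInv F₀ r|) atTop (nhds 0) :=
  genInv_tendstoUniformly_of_pointwise_general F₀ F a b p q hF₀ hF hstrict hconv hap hpq hqb
end

section
/- (Multivariate Pólya theorem) Let W₁,…,W_L be real random variables whose marginal distribution functions F_ℓ are continuous, with joint distribution function F : ℝ^L → [0,1]. Let (Fₙ : ℝ^L → [0,1]) be a sequence of (joint) distribution functions with Fₙ(w) → F(w) for every w ∈ ℝ^L. Then sup_{w ∈ ℝ^L} |Fₙ(w) − F(w)| → 0 as n → ∞. -/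
/-!
Pólya's argument. The quantiles of levels `j / K`, `0 < j < K`, of each (continuous) marginal
cdf `Gᵢ` cut `ℝ` into finitely many pieces of `Gᵢ`-mass at most `1 / K`. The union bound
`F w ≤ F v + ∑ i, (Gᵢ (w i) - Gᵢ (v i))` for `v ≤ w` then squeezes every `F w` between values
of `F` at finitely many grid points up to `O(L / K)`; the two tails are handled by
`F w ≤ Gᵢ (w i)` from below and by the mass outside the orthant of the top grid point from above.
On finitely many grid points the pointwise convergence is uniform, and monotonicity of
`Fₙ` transfers it to all of `ℝ^L`.
-/

open Filter Set MeasureTheory Topology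

section Bracketing

variable {X : Type*} {f : ℕ → X → ℝ} {g : X → ℝ}

lemma eventually_forall_abs_sub_le_of_brackets (Φ : Set ((ℕ → ℝ) × ℝ)) (hΦ : Φ.Finite)
    (hlim : ∀ p ∈ Φ, Tendsto p.1 atTop (𝓝 p.2)) {ε : ℝ} (hε : 0 < ε)
    (hlower : ∀ x, ∃ p ∈ Φ, (∀ n, p.1 n ≤ f n x) ∧ g x ≤ p.2 + ε)
    (hupper : ∀ x, ∃ p ∈ Φ, (∀ n, f n x ≤ p.1 n) ∧ p.2 - ε ≤ g x) :
    ∀ᶠ n in atTop, ∀ x, |f n x - g x| ≤ 2 * ε := by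
  have hclose : ∀ᶠ n in atTop, ∀ p ∈ Φ, |p.1 n - p.2| ≤ ε := by
    rw [hΦ.eventually_all]
    exact fun p hp => (Metric.tendsto_nhds.1 (hlim p hp) ε hε).mono fun n hn => hn.le
  filter_upwards [hclose] with n hn x
  obtain ⟨p, hp, hpf, hpg⟩ := hlower x
  obtain ⟨q, hq, hqf, hqg⟩ := hupper x
  have hp' := abs_le.1 (hn p hp)
  have hq' := abs_le.1 (hn q hq)
  rw [abs_le]
  constructor <;> linarith [hpf n, hqf n]

lemma tendsto_iSup_abs_sub_of_eventually
    (h : ∀ ε > 0, ∀ᶠ n in atTop, ∀ x, |f n x - g x| ≤ ε) :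
    Tendsto (fun n => ⨆ x, |f n x - g x|) atTop (𝓝 0) := by
  refine Metric.tendsto_nhds.2 fun ε hε => ?_
  filter_upwards [h (ε / 2) (half_pos hε)] with n hn
  have hsup := Real.iSup_le hn (half_pos hε).le
  rw [Real.dist_0_eq_abs, abs_of_nonneg (Real.iSup_nonneg fun x => abs_nonneg _)]
  linarith

end Bracketing

section Grid

variable {G : ℝ → ℝ}

lemma exists_quantile (hG : Continuous G) (h0 : Tendsto G atBot (𝓝 0))
    (h1 : Tendsto G atTop (𝓝 1)) {c : ℝ} (hc0 : 0 < c) (hc1 : c < 1) :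
    ∃ s, IsLeast {t | c ≤ G t} s ∧ G s = c := by
  obtain ⟨a, ha⟩ := eventually_atBot.1 (h0.eventually (gt_mem_nhds hc0))
  obtain ⟨b, hb⟩ := (h1.eventually (lt_mem_nhds hc1)).exists
  have hbdd : a ∈ lowerBounds {t | c ≤ G t} := fun t ht =>
    le_of_not_ge fun hta => (ha t hta).not_ge ht
  have hleast := (isClosed_le continuous_const hG).isLeast_csInf ⟨b, hb.le⟩ ⟨a, hbdd⟩
  refine ⟨_, hleast, le_antisymm ?_ hleast.1⟩
  obtain ⟨t, ht, hGt⟩ := intermediate_value_Icc (hbdd hleast.1) hG.continuousOn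
    ⟨(ha a le_rfl).le, hleast.1⟩
  rw [le_antisymm ht.2 (hleast.2 hGt.ge)] at hGt
  exact hGt.le

lemma exists_nat_mem_Ioo_le_le_add_one {K : ℕ} {y : ℝ} (hy : 1 < y) (hyK : y ≤ K) :
    ∃ j ∈ Finset.Ioo 0 K, (j : ℝ) ≤ y ∧ y ≤ j + 1 := by
  have hceil : 2 ≤ ⌈y⌉₊ := Nat.lt_ceil.2 (by exact_mod_cast hy)
  have hceilK : ⌈y⌉₊ ≤ K := Nat.ceil_le.2 hyK
  refine ⟨⌈y⌉₊ - 1, Finset.mem_Ioo.2 ⟨by omega, by omega⟩, ?_, ?_⟩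
  · rw [Nat.cast_sub (by omega), Nat.cast_one]
    linarith [Nat.ceil_lt_add_one (by linarith : 0 ≤ y)]
  · rw [Nat.cast_sub (by omega), Nat.cast_one, sub_add_cancel]
    exact Nat.le_ceil y

lemma exists_nat_mem_Ioo_lt_le_add_one {K : ℕ} {y : ℝ} (hy : 0 ≤ y) (hyK : y + 1 < K) :
    ∃ j ∈ Finset.Ioo 0 K, y < j ∧ (j : ℝ) ≤ y + 1 := by
  have hfloor : (⌊y⌋₊ : ℝ) ≤ y := Nat.floor_le hy
  refine ⟨⌊y⌋₊ + 1, Finset.mem_Ioo.2 ⟨by omega, ?_⟩, ?_, ?_⟩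
  · exact_mod_cast (by push_cast; linarith : ((⌊y⌋₊ + 1 : ℕ) : ℝ) < K)
  · exact_mod_cast Nat.lt_floor_add_one y
  · push_cast
    linarith

lemma exists_finset_grid (hmono : Monotone G) (hcont : Continuous G)
    (h0 : Tendsto G atBot (𝓝 0)) (h1 : Tendsto G atTop (𝓝 1)) {ε : ℝ} (hε : 0 < ε) :
    ∃ T : Finset ℝ, ∃ b, 1 - ε ≤ G b ∧
      (∀ t, ε < G t → ∃ s ∈ T, s ≤ t ∧ G t ≤ G s + ε) ∧
      ∀ t, ∃ s ∈ T, min t b ≤ s ∧ G s ≤ G t + ε := by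
  obtain ⟨K, hK⟩ := exists_nat_gt (max 2 (1 / ε))
  have hK2 : 2 < (K : ℝ) := (le_max_left _ _).trans_lt hK
  have hKpos : (0 : ℝ) < K := by linarith
  have hKε : 1 ≤ ε * K := by
    rw [mul_comm, ← div_le_iff₀ hε]
    exact ((le_max_right _ _).trans_lt hK).le
  have hquantile : ∀ j ∈ Finset.Ioo 0 K,
      ∃ s, IsLeast {t | (j : ℝ) / K ≤ G t} s ∧ G s = j / K := by
    intro j hj
    obtain ⟨hj0, hjK⟩ := Finset.mem_Ioo.1 hj
    exact exists_quantile hcont h0 h1 (by positivity)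
      ((div_lt_one hKpos).2 (by exact_mod_cast hjK))
  choose! q hq using hquantile
  -- `T` is the set of quantiles `q j` of level `j / K`, and `b` the top one `q (K - 1)`.
  have hK2' : 2 < K := by exact_mod_cast hK2
  have hG1 : ∀ t, G t ≤ 1 := hmono.ge_of_tendsto h1
  have hK1 : K - 1 ∈ Finset.Ioo 0 K := Finset.mem_Ioo.2 ⟨by omega, by omega⟩
  have hGb : G (q (K - 1)) * K = K - 1 := by
    rw [(hq _ hK1).2, Nat.cast_sub (by omega), Nat.cast_one, div_mul_cancel₀ _ hKpos.ne']
  refine ⟨(Finset.Ioo 0 K).image q, q (K - 1), ?_, ?_, ?_⟩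
  · refine le_of_mul_le_mul_right ?_ hKpos
    rw [hGb, sub_mul]
    linarith
  · intro t ht
    have hy : 1 < G t * K := by nlinarith
    have hyK : G t * K ≤ K := by nlinarith [hG1 t]
    obtain ⟨j, hj, hjy, hyj⟩ := exists_nat_mem_Ioo_le_le_add_one hy hyK
    refine ⟨q j, Finset.mem_image_of_mem q hj, (hq j hj).1.2 ((div_le_iff₀ hKpos).2 hjy), ?_⟩
    rw [(hq j hj).2, ← sub_le_iff_le_add, le_div_iff₀ hKpos, sub_mul]
    linarith
  · intro t
    by_cases ht : G t * K + 1 < K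
    · obtain ⟨j, hj, hyj, hjy⟩ := exists_nat_mem_Ioo_lt_le_add_one
        (mul_nonneg (hmono.le_of_tendsto h0 t) hKpos.le) ht
      refine ⟨q j, Finset.mem_image_of_mem q hj, (min_le_left _ _).trans ?_, ?_⟩
      · refine le_of_not_gt fun hlt => hyj.not_ge ?_
        rw [← div_le_iff₀ hKpos, ← (hq j hj).2]
        exact hmono hlt.le
      · rw [(hq j hj).2, div_le_iff₀ hKpos, add_mul]
        linarith
    · refine ⟨q (K - 1), Finset.mem_image_of_mem q hK1, min_le_right _ _, ?_⟩
      have : G (q (K - 1)) ≤ G t := le_of_mul_le_mul_right (by linarith) hKpos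
      linarith

end Grid

lemma measureReal_iInter_le_add_sum {α ι : Type*} [MeasurableSpace α] [Fintype ι]
    (ν : Measure α) [IsFiniteMeasure ν] (A B : ι → Set α) :
    ν.real (⋂ i, A i) ≤ ν.real (⋂ i, B i) + ∑ i, ν.real (A i \ B i) := by
  have hsub : ⋂ i, A i ⊆ (⋂ i, B i) ∪ ⋃ i, A i \ B i := fun x hx => by
    by_cases hB : ∀ i, x ∈ B i
    · exact Or.inl (mem_iInter.2 hB)
    · obtain ⟨i, hi⟩ := not_forall.1 hB
      exact Or.inr (mem_iUnion.2 ⟨i, mem_iInter.1 hx i, hi⟩)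
  calc ν.real (⋂ i, A i) ≤ ν.real ((⋂ i, B i) ∪ ⋃ i, A i \ B i) := measureReal_mono hsub
    _ ≤ ν.real (⋂ i, B i) + ν.real (⋃ i, A i \ B i) := measureReal_union_le _ _
    _ ≤ _ := by gcongr; exact measureReal_iUnion_fintype_le _

section JointCDF

variable {Ω ι : Type*} [MeasurableSpace Ω]

def jointCDF (ν : Measure Ω) (W : ι → Ω → ℝ) (w : ι → ℝ) : ℝ :=
  ν.real {ω | ∀ i, W i ω ≤ w i}

variable {ν : Measure Ω} {W : ι → Ω → ℝ}

lemma jointCDF_eq_measureReal_iInter (w : ι → ℝ) :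
    jointCDF ν W w = ν.real (⋂ i, {ω | W i ω ≤ w i}) := by
  rw [jointCDF, ofPred_forall]

lemma jointCDF_nonneg (w : ι → ℝ) : 0 ≤ jointCDF ν W w := measureReal_nonneg

lemma jointCDF_mono [IsFiniteMeasure ν] : Monotone (jointCDF ν W) := fun _ _ hvw =>
  measureReal_mono fun _ hω i => (hω i).trans (hvw i)

lemma jointCDF_le_marginal [IsFiniteMeasure ν] (w : ι → ℝ) (i : ι) :
    jointCDF ν W w ≤ ν.real {ω | W i ω ≤ w i} :=
  measureReal_mono fun _ hω => hω i

lemma measureReal_setOf_le_sdiff_le [IsFiniteMeasure ν] {V : Ω → ℝ} (hV : Measurable V)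
    {s t ε : ℝ} (hε : 0 ≤ ε) (h : ν.real {ω | V ω ≤ s} ≤ ν.real {ω | V ω ≤ t} + ε) :
    ν.real ({ω | V ω ≤ s} \ {ω | V ω ≤ t}) ≤ ε := by
  rcases le_total s t with hst | hts
  · rw [sdiff_eq_bot_iff.2 fun ω hω => le_trans hω hst]
    simpa using hε
  · have hsub : {ω | V ω ≤ t} ⊆ {ω | V ω ≤ s} := fun ω hω => le_trans hω hts
    rw [measureReal_sdiff hsub (measurableSet_le hV measurable_const)]
    linarith

lemma jointCDF_le_add_of_marginal_le [Fintype ι] [IsFiniteMeasure ν]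
    (hW : ∀ i, Measurable (W i)) {v w : ι → ℝ} {ε : ℝ} (hε : 0 ≤ ε)
    (h : ∀ i, ν.real {ω | W i ω ≤ w i} ≤ ν.real {ω | W i ω ≤ v i} + ε) :
    jointCDF ν W w ≤ jointCDF ν W v + Fintype.card ι * ε := by
  rw [jointCDF_eq_measureReal_iInter, jointCDF_eq_measureReal_iInter]
  refine (measureReal_iInter_le_add_sum ν _ fun i => {ω | W i ω ≤ v i}).trans ?_
  gcongr
  calc ∑ i, ν.real ({ω | W i ω ≤ w i} \ {ω | W i ω ≤ v i}) ≤ ∑ _i : ι, ε :=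
        Finset.sum_le_sum fun i _ => measureReal_setOf_le_sdiff_le (hW i) hε (h i)
    _ = Fintype.card ι * ε := by rw [Finset.sum_const, Finset.card_univ, nsmul_eq_mul]

lemma one_sub_jointCDF_le [Fintype ι] [IsProbabilityMeasure ν] (hW : ∀ i, Measurable (W i))
    {b : ι → ℝ} {ε : ℝ} (h : ∀ i, 1 - ε ≤ ν.real {ω | W i ω ≤ b i}) :
    1 - jointCDF ν W b ≤ Fintype.card ι * ε := by
  have key := measureReal_iInter_le_add_sum ν (fun _ => univ) (fun i => {ω | W i ω ≤ b i})
  rw [iInter_univ, probReal_univ, ← jointCDF_eq_measureReal_iInter] at key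
  have htail : ∀ i, ν.real (univ \ {ω | W i ω ≤ b i}) ≤ ε := fun i => by
    rw [← compl_eq_univ_sdiff, measureReal_compl (measurableSet_le (hW i) measurable_const),
      probReal_univ]
    linarith [h i]
  have := Finset.sum_le_sum fun i (_ : i ∈ Finset.univ) => htail i
  simp only [Finset.sum_const, Finset.card_univ, nsmul_eq_mul] at this
  linarith

lemma jointCDF_le_add_one_sub [Countable ι] [IsProbabilityMeasure ν]
    (hW : ∀ i, Measurable (W i)) {w u b : ι → ℝ} (h : ∀ i, min (w i) (b i) ≤ u i) :
    jointCDF ν W w ≤ jointCDF ν W u + (1 - jointCDF ν W b) := by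
  have hb : MeasurableSet {ω | ∀ i, W i ω ≤ b i} := by
    simp only [ofPred_forall]; exact .iInter fun i => measurableSet_le (hW i) measurable_const
  have hsub : {ω | ∀ i, W i ω ≤ w i} ⊆ {ω | ∀ i, W i ω ≤ u i} ∪ {ω | ∀ i, W i ω ≤ b i}ᶜ :=
    fun ω hω => or_iff_not_imp_right.2 fun hωb i =>
      (le_min (hω i) (not_not.1 hωb i)).trans (h i)
  calc jointCDF ν W w ≤ _ := measureReal_mono hsub
    _ ≤ _ := measureReal_union_le _ _
    _ = _ := by rw [measureReal_compl hb, probReal_univ]; rfl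

end JointCDF

open ProbabilityTheory in
lemma tendsto_measureReal_setOf_le_atBot_atTop {Ω : Type*} [MeasurableSpace Ω] {ν : Measure Ω}
    [IsProbabilityMeasure ν] {V : Ω → ℝ} (hV : Measurable V) :
    Tendsto (fun t => ν.real {ω | V ω ≤ t}) atBot (𝓝 0) ∧
      Tendsto (fun t => ν.real {ω | V ω ≤ t}) atTop (𝓝 1) := by
  have := Measure.isProbabilityMeasure_map (μ := ν) hV.aemeasurable
  have hcdf : ⇑(cdf (ν.map V)) = fun t => ν.real {ω | V ω ≤ t} := funext fun t => by
    rw [cdf_eq_real, map_measureReal_apply hV measurableSet_Iic]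
    rfl
  exact hcdf ▸ ⟨tendsto_cdf_atBot _, tendsto_cdf_atTop _⟩

theorem eventually_forall_abs_jointCDF_sub_le {Ω ι : Type*} [MeasurableSpace Ω] [Fintype ι]
    (ℙ : Measure Ω) [IsProbabilityMeasure ℙ] {W : ι → Ω → ℝ} (hW : ∀ i, Measurable (W i))
    (hcont : ∀ i, Continuous fun t => ℙ.real {ω | W i ω ≤ t})
    {μ : ℕ → Measure (ι → ℝ)} [∀ n, IsProbabilityMeasure (μ n)]
    (hconv : ∀ w, Tendsto (fun n => jointCDF (μ n) (fun i x => x i) w) atTop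
      (𝓝 (jointCDF ℙ W w)))
    {ε : ℝ} (hε : 0 < ε) :
    ∀ᶠ n in atTop, ∀ w, |jointCDF (μ n) (fun i x => x i) w - jointCDF ℙ W w| ≤
      2 * ((2 * Fintype.card ι + 1) * ε) := by
  set F := jointCDF ℙ W
  set Fn := fun n => jointCDF (μ n) (fun i (x : ι → ℝ) => x i)
  have hcoord : ∀ i, Measurable fun x : ι → ℝ => x i := measurable_pi_apply
  have hcard : (0 : ℝ) ≤ Fintype.card ι * ε := by positivity
  choose T b hb hlower hupper using fun i =>
    exists_finset_grid (fun s t hst => measureReal_mono fun ω (hω : W i ω ≤ s) => hω.trans hst)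
      (hcont i) (tendsto_measureReal_setOf_le_atBot_atTop (hW i)).1
      (tendsto_measureReal_setOf_le_atBot_atTop (hW i)).2 hε
  set grid := Set.pi univ fun i => (T i : Set ℝ)
  have hgrid : grid.Finite := Set.Finite.pi fun i => (T i).finite_toSet
  refine eventually_forall_abs_sub_le_of_brackets
    ({(0, 0)} ∪ ((fun l => (fun n => Fn n l, F l)) '' grid ∪
      (fun u => (fun n => Fn n u + (1 - Fn n b), F u + (1 - F b))) '' grid))
    ((finite_singleton _).union ((hgrid.image _).union (hgrid.image _))) ?_ (by positivity) ?_ ?_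
  · rintro p (rfl | ⟨l, -, rfl⟩ | ⟨u, -, rfl⟩)
    · exact tendsto_const_nhds
    · exact hconv l
    · exact (hconv u).add (tendsto_const_nhds.sub (hconv b))
  · intro w
    by_cases htail : ∃ i, ℙ.real {ω | W i ω ≤ w i} ≤ ε
    · obtain ⟨i, hi⟩ := htail
      refine ⟨(0, 0), Or.inl rfl, fun n => jointCDF_nonneg w, ?_⟩
      have := jointCDF_le_marginal (ν := ℙ) (W := W) w i
      dsimp only
      linarith
    · choose l hlT hlw hGl using fun i => hlower i (w i) (not_le.1 (not_exists.1 htail i))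
      refine ⟨_, Or.inr (Or.inl ⟨l, fun i _ => hlT i, rfl⟩), fun n => jointCDF_mono hlw, ?_⟩
      have := jointCDF_le_add_of_marginal_le hW hε.le hGl
      dsimp only
      linarith
  · intro w
    choose u huT hwu hGu using fun i => hupper i (w i)
    refine ⟨_, Or.inr (Or.inr ⟨u, fun i _ => huT i, rfl⟩),
      fun n => jointCDF_le_add_one_sub hcoord hwu, ?_⟩
    have hFu := jointCDF_le_add_of_marginal_le hW hε.le hGu
    have hFb := one_sub_jointCDF_le hW hb
    dsimp only
    linarith

/-- multivariate Pólya theorem: if the joint distribution functions of a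
sequence of `L`-dimensional probability measures converge pointwise to the joint
distribution function of the law of a random vector `W` whose marginal distribution
functions are all continuous, then the convergence is uniform over `ℝ^L`. -/
theorem multivariate_polya
    (L : ℕ) {Ω : Type*} [MeasurableSpace Ω] (ℙ : Measure Ω) [IsProbabilityMeasure ℙ]
    (W : Fin L → Ω → ℝ) (hW : ∀ ℓ, Measurable (W ℓ))
    (μ : ℕ → Measure (Fin L → ℝ)) (hμ : ∀ n, IsProbabilityMeasure (μ n))
    (hmarg_cont : ∀ ℓ : Fin L, Continuous fun t : ℝ => (ℙ {ω | W ℓ ω ≤ t}).toReal)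
    (hconv : ∀ w : Fin L → ℝ,
      Tendsto (fun n => ((μ n) {x | ∀ ℓ, x ℓ ≤ w ℓ}).toReal) atTop
        (nhds ((ℙ {ω | ∀ ℓ, W ℓ ω ≤ w ℓ}).toReal))) :
    Tendsto
      (fun n => ⨆ w : Fin L → ℝ,
        |((μ n) {x | ∀ ℓ, x ℓ ≤ w ℓ}).toReal - (ℙ {ω | ∀ ℓ, W ℓ ω ≤ w ℓ}).toReal|)
      atTop (nhds 0) := by
  refine tendsto_iSup_abs_sub_of_eventually (f := fun n => jointCDF (μ n) (fun ℓ x => x ℓ))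
    (g := jointCDF ℙ W) fun δ hδ => ?_
  have hC : (0 : ℝ) < 2 * (2 * L + 1) := by positivity
  filter_upwards [eventually_forall_abs_jointCDF_sub_le ℙ hW hmarg_cont hconv
    (div_pos hδ hC)] with n hn w
  calc _ ≤ 2 * ((2 * Fintype.card (Fin L) + 1) * (δ / (2 * (2 * L + 1)))) := hn w
    _ = δ := by rw [Fintype.card_fin]; field_simp
end
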